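/- arXiv:1102.2799 — 2 statements merged into one kernel-verified Lean document; each statement's English description precedes it below -/
import Mathlib

section
/- For any frequency permutation π in S_n^λ (the set of permutations of the multiset with each symbol 1,…,m appearing exactly λ times, n = mλ), the ball of radius r centered at π under Chebyshev distance has the same cardinality as the ball of radius r centered at the identity frequency permutation e, where e_i = ⌈i/λ⌉. -/
open scoped Classical

/-- `π` is a frequency permutation over `{1,…,m}` (represented 0-based as `Fin m`)
of length `n = m*lam`, i.e. each symbol appears exactly `lam` times. -/
def isFreqPerm (m lam : ℕ) (π : Fin (m * lam) → Fin m) : Prop :=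
  ∀ k : Fin m, (Finset.univ.filter (fun i => π i = k)).card = lam

noncomputable def FPset (m lam : ℕ) : Finset (Fin (m * lam) → Fin m) :=
  Finset.univ.filter (isFreqPerm m lam)

/-- Chebyshev distance `max_i |x_i - y_i|`. -/
def cheb {n m : ℕ} (x y : Fin n → Fin m) : ℕ :=
  Finset.univ.sup fun i => Nat.dist (x i).val (y i).val

/-- The identity frequency permutation `e_i = ⌈i/λ⌉` (0-based: `e_i = i / λ`). -/
def ident (m lam : ℕ) : Fin (m * lam) → Fin m := fun i =>
  ⟨i.val / lam, Nat.div_lt_of_lt_mul (lt_of_lt_of_eq i.isLt (Nat.mul_comm m lam))⟩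

/-- Ball of radius `d` centered at `π` inside `S_n^λ` under Chebyshev distance. -/
noncomputable def ball (m lam d : ℕ) (π : Fin (m * lam) → Fin m) :
    Finset (Fin (m * lam) → Fin m) :=
  (FPset m lam).filter fun ρ => cheb ρ π ≤ d

noncomputable def Vinf (m lam d : ℕ) : ℕ := (ball m lam d (ident m lam)).card

/-! Relabelling positions by a permutation `σ` preserves `S_n^λ` and the Chebyshev distance, so
`ρ ↦ ρ ∘ σ` maps `B(r, π)` bijectively onto `B(r, π ∘ σ)`. Any two frequency permutations differ
by such a relabelling, because their fibres have the same sizes. -/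

theorem exists_equiv_comp_eq_of_card_fiber_eq {α β : Type*} [Fintype α] {f g : α → β}
    (h : ∀ b, Fintype.card {a // f a = b} = Fintype.card {a // g a = b}) :
    ∃ σ : α ≃ α, f ∘ σ = g :=
  ⟨Equiv.ofFiberEquiv fun b => Fintype.equivOfCardEq (h b).symm,
    funext (Equiv.ofFiberEquiv_map _)⟩

theorem cheb_comp_equiv {n m : ℕ} (σ : Fin n ≃ Fin n) (x y : Fin n → Fin m) :
    cheb (x ∘ σ) (y ∘ σ) = cheb x y := by
  unfold cheb
  conv_rhs => rw [← Finset.univ_map_equiv_to_embedding σ, Finset.sup_map]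
  rfl

theorem isFreqPerm_comp_equiv_iff {m lam : ℕ} (σ : Fin (m * lam) ≃ Fin (m * lam))
    {π : Fin (m * lam) → Fin m} : isFreqPerm m lam (π ∘ σ) ↔ isFreqPerm m lam π :=
  forall_congr' fun _ => Eq.congr_left (Finset.card_equiv σ (by simp))

theorem card_ball_comp_equiv (m lam r : ℕ) (σ : Fin (m * lam) ≃ Fin (m * lam))
    (π : Fin (m * lam) → Fin m) :
    (ball m lam r (π ∘ σ)).card = (ball m lam r π).card := by
  refine (Finset.card_equiv (σ.symm.arrowCongr (Equiv.refl (Fin m))) fun ρ => ?_).symm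
  change ρ ∈ ball m lam r π ↔ ρ ∘ σ ∈ ball m lam r (π ∘ σ)
  simp only [ball, FPset, Finset.mem_filter, Finset.mem_univ, true_and,
    isFreqPerm_comp_equiv_iff, cheb_comp_equiv]

-- `finProdFinEquiv (a, b) = b + lam * a`: the fibres of `ident` are the blocks of length `lam`.
theorem ident_finProdFinEquiv {m lam : ℕ} (p : Fin m × Fin lam) :
    ident m lam (finProdFinEquiv p) = p.1 := by
  ext
  simp [ident, Nat.add_mul_div_left _ _ (Fin.pos p.2), Nat.div_eq_of_lt p.2.isLt]

theorem isFreqPerm_ident (m lam : ℕ) : isFreqPerm m lam (ident m lam) := by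
  intro k
  rw [← Fintype.card_subtype]
  calc Fintype.card {i // ident m lam i = k}
      = Fintype.card {p : Fin m × Fin lam // p.1 = k} :=
        Fintype.card_congr (finProdFinEquiv.subtypeEquiv fun p => by
          rw [ident_finProdFinEquiv]).symm
    _ = lam := by
      rw [Fintype.card_congr (Equiv.prodSubtypeFstEquivSubtypeProd (p := (· = k)))]
      simp

theorem isFreqPerm.exists_equiv_comp_eq {m lam : ℕ} {π π' : Fin (m * lam) → Fin m}
    (hπ : isFreqPerm m lam π) (hπ' : isFreqPerm m lam π') :
    ∃ σ : Fin (m * lam) ≃ Fin (m * lam), π ∘ σ = π' :=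
  exists_equiv_comp_eq_of_card_fiber_eq fun k => by
    rw [Fintype.card_subtype, Fintype.card_subtype, hπ k, hπ' k]

theorem ball_card_eq_ball_ident_general (m lam r : ℕ)
    (π : Fin (m * lam) → Fin m) (hπ : isFreqPerm m lam π) :
    (ball m lam r π).card = (ball m lam r (ident m lam)).card := by
  obtain ⟨σ, hσ⟩ := hπ.exists_equiv_comp_eq (isFreqPerm_ident m lam)
  rw [← hσ, card_ball_comp_equiv]

theorem ball_card_eq_ball_ident (m lam r : ℕ) (hlam : 0 < lam)
    (π : Fin (m * lam) → Fin m) (hπ : isFreqPerm m lam π) :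
    (ball m lam r π).card = (ball m lam r (ident m lam)).card :=
  ball_card_eq_ball_ident_general m lam r π hπ
end

section
/- The number V_∞(λ, λm, d) of elements of S_{λm}^λ within Chebyshev distance d of the identity frequency permutation equals the number of walks of length m from the vertex [1, dλ] back to itself in the directed graph H_{λ,d} whose vertices are the dλ-element subsets of the integer interval [−dλ+1, dλ], with an edge from P to P′ iff there exists a λ-element subset X of P ∪ [dλ+1, dλ+λ] such that (P ∪ [dλ+1, dλ+λ]) \ X contains no element ≤ −dλ+λ and P′ = (((P ∪ [dλ+1, dλ+λ]) \ X) ⊕ (−λ)) \ [dλ+1, dλ+λ], where S ⊕ z = {s+z : s ∈ S}. -/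
/-
Record `π` by the sets `A_k = {i : π_i ≥ k}` of positions that do not yet hold a symbol `< k`,
`0 ≤ k ≤ m`. The condition `d_max(e, π) ≤ d` forces `A_k` to contain every position
`≥ (k + d)λ` and none `< (k - d)λ`, so `A_k` is determined by its trace on the window
`[(k - d)λ, (k + d)λ)`; shifted by `1 - kλ`, this trace is a vertex of `H_{λ,d}`. Passing from
`A_k` to `A_{k+1}` lets the block `[dλ+1, dλ+λ]` enter the window, removes the `λ` positions `X`
holding the symbol `k` and shifts by `-λ`: this is an edge. Conversely, a closed walk from
`[1, dλ]` determines the decreasing chain `A_0 ⊇ ⋯ ⊇ A_m`, and `π_i` is the last `k` with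
`i ∈ A_k`.
-/

open scoped Classical

/-- The interval `[dλ+1, dλ+λ]` of integers. -/
noncomputable def Qset (lam d : ℕ) : Finset ℤ := Finset.Icc ((d * lam : ℤ) + 1) ((d * lam : ℤ) + lam)

/-- Vertices of `H_{λ,d}`: `dλ`-element subsets of `[-dλ+1, dλ]`. -/
def Hvert (lam d : ℕ) (P : Finset ℤ) : Prop :=
  P ⊆ Finset.Icc (-(d * lam : ℤ) + 1) (d * lam) ∧ P.card = d * lam

/-- Edge relation of `H_{λ,d}`. -/
def Hedge (lam d : ℕ) (P P' : Finset ℤ) : Prop :=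
  ∃ X ⊆ P ∪ Qset lam d, X.card = lam ∧
    (∀ s ∈ (P ∪ Qset lam d) \ X, -(d * lam : ℤ) + lam < s) ∧
    P' = (((P ∪ Qset lam d) \ X).image fun s => s - (lam : ℤ)) \ Qset lam d

/-- The vertex set of `H_{λ,d}` as a `Finset` of `Finset ℤ`. -/
noncomputable def verts (lam d : ℕ) : Finset (Finset ℤ) :=
  (Finset.Icc (-(d * lam : ℤ) + 1) (d * lam)).powerset.filter fun P => P.card = d * lam

/-- Out-degree of a vertex `P` of `H_{λ,d}`, counting the valid subsets `X`. -/
noncomputable def outdeg (lam d : ℕ) (P : Finset ℤ) : ℕ :=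
  ((P ∪ Qset lam d).powerset.filter fun X => X.card = lam ∧
    ∀ s ∈ (P ∪ Qset lam d) \ X, -(d * lam : ℤ) + lam < s).card

theorem Fin.exists_iff_le_castSucc_of_antitone {m : ℕ} {p : Fin (m + 1) → Prop}
    (hp : Antitone p) (h0 : p 0) (hm : ¬p (Fin.last m)) :
    ∃ n : Fin m, ∀ j, p j ↔ j ≤ n.castSucc := by
  have hne : (Finset.univ.filter fun j => ¬p j).Nonempty := ⟨Fin.last m, by simpa using hm⟩
  set n' := (Finset.univ.filter fun j => ¬p j).min' hne
  have hn' : ¬p n' := (Finset.mem_filter.1 (Finset.min'_mem _ hne)).2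
  obtain ⟨n, hn⟩ := Fin.exists_succ_eq.2 fun h : n' = 0 => hn' (h ▸ h0)
  refine ⟨n, fun j => ?_⟩
  rw [Fin.le_castSucc_iff, hn]
  constructor
  · intro hj
    by_contra! hle
    exact hn' (hp hle hj)
  · intro hj
    by_contra hpj
    exact absurd (Finset.min'_le _ j (by simpa using hpj)) (not_le.2 hj)

theorem Fin.exists_coe_int_eq {n : ℕ} {i : ℤ} (h0 : 0 ≤ i) (h1 : i < n) :
    ∃ j : Fin n, (j : ℤ) = i :=
  ⟨⟨i.toNat, by omega⟩, by simp [h0]⟩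

namespace ChebyshevBall

open Finset

variable {lam d : ℕ}

theorem abs_sub_ediv_le_iff (hlam : 0 < lam) {a i : ℤ} :
    |a - i / lam| ≤ d ↔ (a - d) * lam ≤ i ∧ i < (a + d + 1) * lam := by
  have hl : (0 : ℤ) < lam := by exact_mod_cast hlam
  rw [abs_le, ← Int.le_ediv_iff_mul_le hl, ← Int.ediv_lt_iff_lt_mul hl]
  omega

/-- `|f i - ⌊i/λ⌋| ≤ d` for all `i`: the condition `d_max(e, π) ≤ d` for sequences indexed
by `ℤ`. -/
def Banded (lam d : ℕ) (f : ℤ → ℤ) : Prop := ∀ i, |f i - i / lam| ≤ d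

namespace Banded

variable {f : ℤ → ℤ} {k i : ℤ}

theorem sub_mul_le (hf : Banded lam d f) (hlam : 0 < lam) (h : k ≤ f i) :
    (k - d) * lam ≤ i := by
  have := ((abs_sub_ediv_le_iff hlam).1 (hf i)).1
  nlinarith

theorem le_apply (hf : Banded lam d f) (hlam : 0 < lam) (h : (k + d) * lam ≤ i) : k ≤ f i := by
  have := ((abs_sub_ediv_le_iff hlam).1 (hf i)).2
  by_contra! hlt
  nlinarith

end Banded

theorem mem_Qset {s : ℤ} :
    s ∈ Qset lam d ↔ (d * lam : ℤ) + 1 ≤ s ∧ s ≤ d * lam + lam :=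
  Finset.mem_Icc

theorem card_Qset : (Qset lam d).card = lam := by
  simp [Qset, Int.card_Icc]

/-- At time `k` the (0-based) position `i` sits at coordinate `i + 1 - kλ`; the vertices of
`H_{λ,d}` live on the coordinates `[-dλ+1, dλ]`. -/
noncomputable def window (lam d : ℕ) (f : ℤ → ℤ) (k : ℤ) : Finset ℤ :=
  (Icc (-(d * lam : ℤ) + 1) (d * lam)).filter fun s => k ≤ f (s - 1 + k * lam)

/-- Reads a state `P` of the walk at time `k` back as a set of positions: those to the right of
the window are open, those to the left are closed. -/
def OpenAt (lam d : ℕ) (P : Finset ℤ) (k i : ℤ) : Prop :=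
  i + 1 - k * lam ∈ P ∨ (d * lam : ℤ) < i + 1 - k * lam

section window

variable {f : ℤ → ℤ} {k i s : ℤ}

theorem mem_window : s ∈ window lam d f k ↔
    (-(d * lam : ℤ) + 1 ≤ s ∧ s ≤ d * lam) ∧ k ≤ f (s - 1 + k * lam) := by
  simp [window]

theorem openAt_window_iff (hf : Banded lam d f) (hlam : 0 < lam) :
    OpenAt lam d (window lam d f k) k i ↔ k ≤ f i := by
  simp only [OpenAt, mem_window, show i + 1 - k * lam - 1 + k * lam = i by ring]
  constructor
  · rintro (⟨-, h⟩ | h)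
    · exact h
    · exact hf.le_apply hlam (by linarith)
  · intro h
    have := hf.sub_mul_le hlam h
    by_cases hs : i + 1 - k * lam ≤ d * lam
    · exact Or.inl ⟨⟨by linarith, hs⟩, h⟩
    · exact Or.inr (by linarith)

theorem window_eq_Icc (h : ∀ i, k ≤ f i ↔ k * lam ≤ i) :
    window lam d f k = Icc 1 (d * lam : ℤ) := by
  ext s
  rw [mem_window, h, mem_Icc]
  omega

end window

section hedge

variable {P P' X : Finset ℤ} {k i : ℤ}

theorem le_of_mem_union_Qset (hP : P ⊆ Icc (-(d * lam : ℤ) + 1) (d * lam)) {s : ℤ}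
    (hs : s ∈ P ∪ Qset lam d) : s ≤ d * lam + lam := by
  rcases mem_union.1 hs with h | h
  · have := (mem_Icc.1 (hP h)).2; omega
  · exact (mem_Qset.1 h).2

theorem hvert_of_hedge (hP : Hvert lam d P) (h : Hedge lam d P P') : Hvert lam d P' := by
  obtain ⟨hPsub, hPcard⟩ := hP
  obtain ⟨X, hX, hXcard, hrest, rfl⟩ := h
  have hle : ∀ s ∈ P ∪ Qset lam d, s ≤ d * lam + lam := fun s => le_of_mem_union_Qset hPsub
  have hdisj : Disjoint P (Qset lam d) := disjoint_left.2 fun s hP hQ => by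
    have := (mem_Icc.1 (hPsub hP)).2; have := (mem_Qset.1 hQ).1; omega
  have himage : Disjoint (((P ∪ Qset lam d) \ X).image fun s => s - (lam : ℤ)) (Qset lam d) :=
    disjoint_left.2 fun t ht hQ => by
      obtain ⟨s, hs, rfl⟩ := mem_image.1 ht
      have := hle s (mem_sdiff.1 hs).1; have := (mem_Qset.1 hQ).1; omega
  rw [sdiff_eq_self_of_disjoint himage]
  refine ⟨fun t ht => ?_, ?_⟩
  · obtain ⟨s, hs, rfl⟩ := mem_image.1 ht
    have := hle s (mem_sdiff.1 hs).1; have := hrest s hs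
    exact mem_Icc.2 ⟨by omega, by omega⟩
  · rw [card_image_of_injective _ (sub_left_injective), card_sdiff_of_subset hX,
      card_union_of_disjoint hdisj, hPcard, card_Qset, hXcard]
    omega

theorem sub_mem_iff_mem_sdiff (hP : P ⊆ Icc (-(d * lam : ℤ) + 1) (d * lam))
    (hP' : P' = (((P ∪ Qset lam d) \ X).image fun s => s - (lam : ℤ)) \ Qset lam d) {s : ℤ} :
    s - lam ∈ P' ↔ s ∈ (P ∪ Qset lam d) \ X := by
  rw [hP', mem_sdiff, mem_image]
  constructor
  · rintro ⟨⟨t, ht, hts⟩, -⟩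
    rwa [← sub_left_injective hts]
  · intro hs
    have := le_of_mem_union_Qset hP (mem_sdiff.1 hs).1
    exact ⟨⟨s, hs, rfl⟩, fun hQ => by have := (mem_Qset.1 hQ).1; omega⟩

theorem openAt_succ_iff (hP : P ⊆ Icc (-(d * lam : ℤ) + 1) (d * lam))
    (hX : X ⊆ P ∪ Qset lam d)
    (hP' : P' = (((P ∪ Qset lam d) \ X).image fun s => s - (lam : ℤ)) \ Qset lam d) :
    OpenAt lam d P' (k + 1) i ↔ OpenAt lam d P k i ∧ i + 1 - k * lam ∉ X := by
  have hshift : i + 1 - (k + 1) * lam = i + 1 - k * lam - lam := by ring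
  simp only [OpenAt, hshift, sub_mem_iff_mem_sdiff hP hP', mem_sdiff, mem_union, mem_Qset]
  generalize i + 1 - k * lam = s
  have hX' : s ∈ X → s ≤ d * lam + lam := fun h => le_of_mem_union_Qset hP (hX h)
  by_cases hsX : s ∈ X
  · have := hX' hsX
    simp only [hsX, not_true_eq_false, and_false, false_or, iff_false, not_lt]
    omega
  · by_cases hsP : s ∈ P
    · simp only [hsP, hsX, true_or, true_and, not_false_eq_true]
    · simp only [hsP, hsX, false_or, and_true, not_false_eq_true]
      omega

end hedge

section forward

variable {f : ℤ → ℤ} {k s : ℤ}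

theorem mem_window_union_Qset (hf : Banded lam d f) (hlam : 0 < lam) :
    s ∈ window lam d f k ∪ Qset lam d ↔
      (-(d * lam : ℤ) + 1 ≤ s ∧ s ≤ d * lam + lam) ∧ k ≤ f (s - 1 + k * lam) := by
  have hD : (0 : ℤ) ≤ d * lam := by positivity
  rw [mem_union, mem_window, mem_Qset]
  constructor
  · rintro (⟨⟨h1, h2⟩, h3⟩ | ⟨h1, h2⟩)
    · exact ⟨⟨h1, by omega⟩, h3⟩
    · exact ⟨⟨by omega, h2⟩, hf.le_apply hlam (by linarith)⟩
  · rintro ⟨⟨h1, h2⟩, h3⟩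
    by_cases hs : s ≤ d * lam
    · exact Or.inl ⟨⟨h1, hs⟩, h3⟩
    · exact Or.inr ⟨by omega, h2⟩

theorem fiber_eq_image_window (hf : Banded lam d f) (hlam : 0 < lam) :
    {i | f i = k} = (fun s => s - 1 + k * lam) ''
      ↑((window lam d f k ∪ Qset lam d).filter fun s => f (s - 1 + k * lam) = k) := by
  ext i
  simp only [Set.mem_ofPred_eq, Set.mem_image, mem_coe, mem_filter, mem_window_union_Qset hf hlam]
  constructor
  · intro h
    have hlow := hf.sub_mul_le hlam h.ge
    have hup : i < (k + 1 + d) * lam := by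
      by_contra! hi
      have := hf.le_apply hlam hi
      omega
    refine ⟨i + 1 - k * lam, ⟨⟨⟨by linarith, by linarith⟩, ?_⟩, ?_⟩, by ring⟩ <;>
      rw [show i + 1 - k * lam - 1 + k * lam = i by ring]
    exacts [h.ge, h]
  · rintro ⟨s, ⟨-, h⟩, rfl⟩
    exact h

theorem hedge_window (hf : Banded lam d f) (hlam : 0 < lam) (hfib : {i | f i = k}.ncard = lam) :
    Hedge lam d (window lam d f k) (window lam d f (k + 1)) := by
  set X := (window lam d f k ∪ Qset lam d).filter fun s => f (s - 1 + k * lam) = k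
  refine ⟨X, filter_subset _ _, ?_, fun s hs => ?_, ?_⟩
  · rw [← Set.ncard_coe_finset, ← hfib, fiber_eq_image_window hf hlam,
      Set.ncard_image_of_injective _ fun a b h => by simpa using h]
  · obtain ⟨hsW, hsX⟩ := mem_sdiff.1 hs
    have hk := ((mem_window_union_Qset hf hlam).1 hsW).2
    have hk' : k + 1 ≤ f (s - 1 + k * lam) :=
      lt_of_le_of_ne hk fun h => hsX (mem_filter.2 ⟨hsW, h.symm⟩)
    have := hf.sub_mul_le hlam hk'
    linarith
  · ext t
    have hmem := sub_mem_iff_mem_sdiff (P := window lam d f k) (X := X) (s := t + lam)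
      (filter_subset _ _) rfl
    rw [add_sub_cancel_right] at hmem
    rw [hmem, mem_sdiff, mem_filter, mem_window_union_Qset hf hlam, mem_window,
      show t + lam - 1 + k * lam = t - 1 + (k + 1) * lam by ring]
    have hlow : k + 1 ≤ f (t - 1 + (k + 1) * lam) → -(d * lam : ℤ) + 1 ≤ t := fun h => by
      have := hf.sub_mul_le hlam h
      linarith
    generalize f (t - 1 + (k + 1) * lam) = v at hlow ⊢
    omega

end forward

def IsClosedWalk (m lam d : ℕ) (w : Fin (m + 1) → Finset ℤ) : Prop :=
  w 0 = Finset.Icc (1 : ℤ) (d * lam) ∧ w (Fin.last m) = Finset.Icc (1 : ℤ) (d * lam) ∧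
    (∀ j : Fin (m + 1), Hvert lam d (w j)) ∧
    ∀ j : Fin m, Hedge lam d (w j.castSucc) (w j.succ)

theorem hvert_Icc : Hvert lam d (Icc 1 (d * lam : ℤ)) :=
  ⟨Icc_subset_Icc (by linarith [show (0 : ℤ) ≤ d * lam by positivity]) le_rfl,
    by rw [Int.card_Icc, add_sub_cancel_right]; exact_mod_cast Int.toNat_natCast _⟩

theorem isClosedWalk_window {m : ℕ} {f : ℤ → ℤ} (hf : Banded lam d f) (hlam : 0 < lam)
    (h0 : ∀ i, 0 ≤ f i ↔ 0 ≤ i) (hm : ∀ i, (m : ℤ) ≤ f i ↔ m * lam ≤ i)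
    (hfib : ∀ k : Fin m, {i | f i = k}.ncard = lam) :
    IsClosedWalk m lam d fun j => window lam d f j := by
  have hstart : window lam d f 0 = Icc 1 (d * lam : ℤ) := window_eq_Icc (by simpa using h0)
  have hedge (j : Fin m) : Hedge lam d (window lam d f j.castSucc) (window lam d f j.succ) := by
    rw [Fin.val_castSucc, Fin.val_succ, Nat.cast_succ]
    exact hedge_window hf hlam (hfib j)
  refine ⟨by simpa using hstart, by simpa using window_eq_Icc hm, fun j => ?_, hedge⟩
  induction j using Fin.induction with
  | zero => simpa [hstart] using hvert_Icc
  | succ j ih => exact hvert_of_hedge ih (hedge j)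

section backward

variable {P P' X : Finset ℤ} {f : ℤ → ℤ} {k i : ℤ}

theorem openAt_Icc_iff : OpenAt lam d (Icc 1 (d * lam : ℤ)) k i ↔ k * lam ≤ i := by
  have hD : (0 : ℤ) ≤ d * lam := by positivity
  rw [OpenAt, mem_Icc]
  omega

theorem OpenAt.sub_mul_le (hP : P ⊆ Icc (-(d * lam : ℤ) + 1) (d * lam))
    (h : OpenAt lam d P k i) : (k - d) * lam ≤ i := by
  have hD : (0 : ℤ) ≤ d * lam := by positivity
  rcases h with h | h
  · have := (mem_Icc.1 (hP h)).1; linarith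
  · linarith

theorem lt_of_not_openAt (h : ¬OpenAt lam d P k i) : i < (k + d) * lam := by
  rw [OpenAt, not_or, not_lt] at h
  linarith [h.2]

theorem openAt_of_mem (hX : X ⊆ P ∪ Qset lam d) (hi : i + 1 - k * lam ∈ X) :
    OpenAt lam d P k i :=
  (mem_union.1 (hX hi)).imp id fun h => by have := (mem_Qset.1 h).1; omega

theorem eq_window_of_openAt_iff (hP : P ⊆ Icc (-(d * lam : ℤ) + 1) (d * lam))
    (h : ∀ i, OpenAt lam d P k i ↔ k ≤ f i) : P = window lam d f k := by
  ext s
  rw [mem_window, ← h, OpenAt, show s - 1 + k * lam + 1 - k * lam = s by ring]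
  constructor
  · intro hs
    exact ⟨mem_Icc.1 (hP hs), Or.inl hs⟩
  · rintro ⟨hs, h | h⟩
    · exact h
    · omega

theorem ncard_fiber_of_hedge (hP : P ⊆ Icc (-(d * lam : ℤ) + 1) (d * lam))
    (hPP' : Hedge lam d P P') (h : ∀ i, OpenAt lam d P k i ↔ k ≤ f i)
    (h' : ∀ i, OpenAt lam d P' (k + 1) i ↔ k + 1 ≤ f i) : {i | f i = k}.ncard = lam := by
  obtain ⟨X, hX, hXcard, -, hP'⟩ := hPP'
  have hfib : {i | f i = k} = (fun s => s - 1 + k * lam) '' X := by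
    ext i
    have hstep := openAt_succ_iff (k := k) (i := i) hP hX hP'
    have hopen : i + 1 - k * lam ∈ X → k ≤ f i := fun hi => (h i).1 (openAt_of_mem hX hi)
    rw [h, h'] at hstep
    rw [Set.mem_ofPred_eq, Set.mem_image]
    simp only [mem_coe]
    constructor
    · intro hi
      refine ⟨i + 1 - k * lam, ?_, by ring⟩
      by_contra hX
      exact absurd (hstep.2 ⟨hi.ge, hX⟩) (by omega)
    · rintro ⟨s, hs, rfl⟩
      rw [show s - 1 + k * lam + 1 - k * lam = s by ring] at hstep hopen
      have := hopen hs
      have := mt hstep.1 (by simp [hs])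
      omega
  rw [hfib, Set.ncard_image_of_injective _ fun a b h => by simpa using h, Set.ncard_coe_finset,
    hXcard]

end backward

section extend

variable {m : ℕ} (π : Fin (m * lam) → Fin m)

/-- `π`, continued by the identity frequency permutation `i ↦ ⌊i/λ⌋` outside `[0, mλ)`. -/
noncomputable def extend (i : ℤ) : ℤ :=
  if h : 0 ≤ i ∧ i < (m * lam : ℕ) then (π ⟨i.toNat, by omega⟩ : ℕ) else i / lam

theorem extend_coe (i : Fin (m * lam)) : extend π i = π i := by
  rw [extend, dif_pos ⟨by positivity, by exact_mod_cast i.isLt⟩]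
  simp

variable {π}

theorem nonneg_extend_iff (hlam : 0 < lam) {i : ℤ} : 0 ≤ extend π i ↔ 0 ≤ i := by
  have hl : (0 : ℤ) < lam := by exact_mod_cast hlam
  unfold extend
  split_ifs with h
  · simp [h.1]
  · rw [Int.ediv_nonneg_iff_of_pos hl]

theorem le_extend_iff (hlam : 0 < lam) {i : ℤ} : (m : ℤ) ≤ extend π i ↔ m * lam ≤ i := by
  have hl : (0 : ℤ) < lam := by exact_mod_cast hlam
  unfold extend
  split_ifs with h
  · push_cast at h
    have := (π ⟨i.toNat, by omega⟩).isLt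
    constructor <;> intro <;> omega
  · rw [Int.le_ediv_iff_mul_le hl]

theorem ncard_setOf_extend_eq (hlam : 0 < lam) (k : Fin m) :
    {i | extend π i = k}.ncard = #{i | π i = k} := by
  have himage : {i | extend π i = k} = (fun i : Fin (m * lam) => (i : ℤ)) '' {i | π i = k} := by
    ext i
    simp only [Set.mem_ofPred_eq, Set.mem_image]
    constructor
    · intro hi
      have h0 : 0 ≤ i := (nonneg_extend_iff (π := π) hlam).1 (by omega)
      have h1 : i < (m * lam : ℕ) := by
        by_contra! h
        have := (le_extend_iff (π := π) hlam).2 (by exact_mod_cast h)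
        omega
      obtain ⟨j, rfl⟩ := Fin.exists_coe_int_eq h0 h1
      rw [extend_coe, Nat.cast_inj, Fin.val_inj] at hi
      exact ⟨j, hi, rfl⟩
    · rintro ⟨j, hj, rfl⟩
      rw [extend_coe, hj]
  rw [himage, Set.ncard_image_of_injective _ fun a b h => by simpa [Fin.val_inj] using h,
    ← Set.ncard_coe_finset, coe_filter]
  simp

theorem isFreqPerm_iff_ncard_extend (hlam : 0 < lam) :
    isFreqPerm m lam π ↔ ∀ k : Fin m, {i | extend π i = k}.ncard = lam := by
  simp only [ncard_setOf_extend_eq hlam, isFreqPerm]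

theorem banded_extend_iff :
    Banded lam d (extend π) ↔ ∀ i : Fin (m * lam), |(π i : ℤ) - i / lam| ≤ d := by
  constructor
  · intro h i
    simpa [extend_coe] using h i
  · intro h i
    unfold extend
    split_ifs with hi
    · simpa [hi.1] using h ⟨i.toNat, by omega⟩
    · simp

theorem mem_ball_ident_iff :
    π ∈ ball m lam d (ident m lam) ↔ isFreqPerm m lam π ∧ Banded lam d (extend π) := by
  rw [banded_extend_iff]
  simp only [ball, FPset, cheb, ident, mem_filter, mem_univ, true_and, Finset.sup_le_iff,
    true_implies]
  refine and_congr_right fun _ => forall_congr' fun i => ?_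
  rw [← Int.natCast_div, abs_le, Nat.dist]
  generalize (i : ℕ) / lam = q
  omega

end extend

section walk

variable {m : ℕ}

noncomputable def walkOf (lam d : ℕ) (π : Fin (m * lam) → Fin m) (j : Fin (m + 1)) :
    Finset ℤ :=
  window lam d (extend π) j

theorem isClosedWalk_walkOf (hlam : 0 < lam) {π : Fin (m * lam) → Fin m}
    (hπ : π ∈ ball m lam d (ident m lam)) : IsClosedWalk m lam d (walkOf lam d π) := by
  obtain ⟨hfreq, hband⟩ := mem_ball_ident_iff.1 hπ
  exact isClosedWalk_window hband hlam (fun _ => nonneg_extend_iff hlam)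
    (fun _ => le_extend_iff hlam) ((isFreqPerm_iff_ncard_extend hlam).1 hfreq)

theorem injOn_walkOf (hlam : 0 < lam) :
    Set.InjOn (walkOf (m := m) lam d) ↑(ball m lam d (ident m lam)) := by
  intro π hπ π' hπ' h
  have hle (j : Fin (m + 1)) (i : ℤ) :
      (j : ℤ) ≤ extend π i ↔ (j : ℤ) ≤ extend π' i := by
    rw [← openAt_window_iff (mem_ball_ident_iff.1 hπ).2 hlam,
      ← openAt_window_iff (mem_ball_ident_iff.1 hπ').2 hlam]
    exact iff_of_eq (congrArg (OpenAt lam d · j i) (congrFun h j))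
  funext i
  refine Fin.ext (le_antisymm ?_ ?_)
  · simpa [extend_coe] using (hle (π i).castSucc i).1 (by simp [extend_coe])
  · simpa [extend_coe] using (hle (π' i).castSucc i).2 (by simp [extend_coe])

theorem exists_openAt_iff_le_extend (hlam : 0 < lam) {w : Fin (m + 1) → Finset ℤ}
    (hw : IsClosedWalk m lam d w) :
    ∃ π : Fin (m * lam) → Fin m,
      ∀ j i, OpenAt lam d (w j) j i ↔ (j : ℤ) ≤ extend π i := by
  obtain ⟨hw0, hwm, hv, he⟩ := hw
  have hanti (i : ℤ) : Antitone fun j : Fin (m + 1) => OpenAt lam d (w j) j i := by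
    refine Fin.antitone_iff_succ_le.2 fun j hj => ?_
    obtain ⟨X, hX, -, -, hP'⟩ := he j
    rw [Fin.val_succ, Nat.cast_succ, ← Fin.val_castSucc] at hj
    exact ((openAt_succ_iff (hv _).1 hX hP').1 hj).1
  have h0 (i : ℤ) : OpenAt lam d (w 0) 0 i ↔ 0 ≤ i := by
    rw [hw0, openAt_Icc_iff, zero_mul]
  have hm (i : ℤ) : OpenAt lam d (w (Fin.last m)) m i ↔ m * lam ≤ i := by
    rw [hwm, openAt_Icc_iff]
  choose π hπ using fun i : Fin (m * lam) =>
    Fin.exists_iff_le_castSucc_of_antitone (hanti i) ((h0 i).2 (by positivity))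
      (by rw [Fin.val_last, hm, not_le]; exact_mod_cast i.isLt)
  refine ⟨π, fun j i => ?_⟩
  rcases lt_or_ge i 0 with hi | hi
  · refine iff_of_false (fun h => absurd ((h0 i).1 (hanti i (Fin.zero_le j) h)) (not_le.2 hi)) ?_
    have := (nonneg_extend_iff (π := π) hlam).not.2 (not_le.2 hi)
    omega
  rcases lt_or_ge i (m * lam) with hi' | hi'
  · obtain ⟨i, rfl⟩ := Fin.exists_coe_int_eq hi (by exact_mod_cast hi')
    rw [hπ i, extend_coe, Fin.le_iff_val_le_val, Fin.val_castSucc, Nat.cast_le]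
  · refine iff_of_true (hanti i (Fin.le_last j) ((hm i).2 hi')) ?_
    have := (le_extend_iff (π := π) hlam).2 hi'
    have := j.isLt
    omega

theorem exists_walkOf_eq (hlam : 0 < lam) {w : Fin (m + 1) → Finset ℤ}
    (hw : IsClosedWalk m lam d w) : ∃ π ∈ ball m lam d (ident m lam), walkOf lam d π = w := by
  obtain ⟨π, hπ⟩ := exists_openAt_iff_le_extend hlam hw
  obtain ⟨-, -, hv, he⟩ := hw
  refine ⟨π, mem_ball_ident_iff.2 ⟨(isFreqPerm_iff_ncard_extend hlam).2 fun k => ?_,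
    banded_extend_iff.2 fun i => ?_⟩,
    funext fun j => (eq_window_of_openAt_iff (hv j).1 (hπ j)).symm⟩
  · refine ncard_fiber_of_hedge (hv _).1 (he k) (hπ k.castSucc) ?_
    simpa using hπ k.succ
  · have hopen := (hπ (π i).castSucc i).2 (by simp [extend_coe])
    have hclosed := (hπ (π i).succ i).not.2 (by simp [extend_coe])
    have hlow := hopen.sub_mul_le (hv _).1
    have hup := lt_of_not_openAt hclosed
    rw [Fin.val_castSucc] at hlow
    rw [Fin.val_succ, Nat.cast_succ] at hup
    exact (abs_sub_ediv_le_iff hlam).2 ⟨hlow, by linarith⟩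

end walk

end ChebyshevBall

open ChebyshevBall in
theorem Vinf_eq_numWalks (m lam d : ℕ) (hlam : 0 < lam) :
    Vinf m lam d = Set.ncard {w : Fin (m + 1) → Finset ℤ |
      w 0 = Finset.Icc (1 : ℤ) (d * lam) ∧
      w (Fin.last m) = Finset.Icc (1 : ℤ) (d * lam) ∧
      (∀ j : Fin (m + 1), Hvert lam d (w j)) ∧
      ∀ j : Fin m, Hedge lam d (w j.castSucc) (w j.succ)} := by
  have himage : {w | IsClosedWalk m lam d w} = walkOf lam d '' ↑(ball m lam d (ident m lam)) :=
    Set.ext fun w => ⟨fun hw => exists_walkOf_eq hlam hw,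
      by rintro ⟨π, hπ, rfl⟩; exact isClosedWalk_walkOf hlam hπ⟩
  rw [Vinf, ← Set.ncard_coe_finset, ← (injOn_walkOf hlam).ncard_image, ← himage]
  rfl
end
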